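/- Let A be a positive bounded operator on a complex Hilbert space H, p ≥ 2, and x, y unit vectors in H. Then ⟨A x, x⟩^p ⟨A y, y⟩^p ≤ [⟨A^p x, x⟩ − ⟨|A − ⟨A x, x⟩ I|^p x, x⟩] · [⟨A^p y, y⟩ − ⟨|A − ⟨A y, y⟩ I|^p y, y⟩] ≤ ⟨A^p x, x⟩ ⟨A^p y, y⟩. -/

import Mathlib

/-!
For `t, a ≥ 0` and `p ≥ 2` one has the scalar inequality
`a ^ p + p a ^ (p - 1) (t - a) + |t - a| ^ p ≤ t ^ p`, which follows on either side of `a` by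
differentiating and using the superadditivity of `u ↦ u ^ (p - 1)`. Since the spectrum of `A`
lies in `[0, ∞)`, the continuous functional calculus turns it into an operator inequality.
Evaluating its quadratic form at a unit vector `x` with `a = ⟨A x, x⟩` kills the linear term,
so `⟨A x, x⟩ ^ p + ⟨|A - a|^p x, x⟩ ≤ ⟨A ^ p x, x⟩`, with both summands on the left nonnegative.
Multiplying these bounds for `x` and `y` gives both inequalities.
-/

open scoped InnerProductSpace

namespace Real

open Set

lemma rpow_add_mul_add_rpow_le_add_rpow {a s p : ℝ} (ha : 0 ≤ a) (hs : 0 ≤ s) (hp : 2 ≤ p) :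
    a ^ p + p * a ^ (p - 1) * s + s ^ p ≤ (a + s) ^ p := by
  have hp1 : 1 ≤ p := by linarith
  let φ : ℝ → ℝ := fun u => (a + u) ^ p - u ^ p - p * a ^ (p - 1) * u
  have hφ' : ∀ u, HasDerivAt φ (p * ((a + u) ^ (p - 1) - u ^ (p - 1) - a ^ (p - 1))) u := by
    intro u
    refine ((((hasDerivAt_id' u).const_add a).rpow_const (Or.inr hp1)).sub
      ((hasDerivAt_id' u).rpow_const (Or.inr hp1)) |>.sub ((hasDerivAt_id' u).const_mul
        (p * a ^ (p - 1)))).congr_deriv ?_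
    ring
  have hmono : MonotoneOn φ (Ici 0) := by
    refine monotoneOn_of_hasDerivWithinAt_nonneg (convex_Ici 0)
      (fun u _ => (hφ' u).continuousAt.continuousWithinAt)
      (fun u _ => (hφ' u).hasDerivWithinAt) fun u hu => ?_
    rw [interior_Ici] at hu
    have hsup := add_rpow_le_rpow_add ha hu.le (by linarith : 1 ≤ p - 1)
    nlinarith
  have := hmono self_mem_Ici hs hs
  simp only [φ, add_zero, mul_zero, sub_zero, zero_rpow (by linarith : p ≠ 0)] at this
  linarith

lemma rpow_add_rpow_le_sub_rpow_add_mul {a s p : ℝ} (hs : 0 ≤ s) (hsa : s ≤ a) (hp : 2 ≤ p) :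
    a ^ p + s ^ p ≤ (a - s) ^ p + p * a ^ (p - 1) * s := by
  have hp1 : 1 ≤ p := by linarith
  let φ : ℝ → ℝ := fun u => (a - u) ^ p + p * a ^ (p - 1) * u - u ^ p
  have hφ' : ∀ u, HasDerivAt φ (p * (a ^ (p - 1) - (a - u) ^ (p - 1) - u ^ (p - 1))) u := by
    intro u
    refine ((((hasDerivAt_id' u).const_sub a).rpow_const (Or.inr hp1)).add
      ((hasDerivAt_id' u).const_mul (p * a ^ (p - 1))) |>.sub
      ((hasDerivAt_id' u).rpow_const (Or.inr hp1))).congr_deriv ?_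
    ring
  have hmono : MonotoneOn φ (Icc 0 a) := by
    refine monotoneOn_of_hasDerivWithinAt_nonneg (convex_Icc 0 a)
      (fun u _ => (hφ' u).continuousAt.continuousWithinAt)
      (fun u _ => (hφ' u).hasDerivWithinAt) fun u hu => ?_
    rw [interior_Icc] at hu
    have hsup := add_rpow_le_rpow_add (sub_nonneg.2 hu.2.le) hu.1.le (by linarith : 1 ≤ p - 1)
    rw [sub_add_cancel] at hsup
    nlinarith
  have := hmono ⟨le_rfl, hs.trans hsa⟩ ⟨hs, hsa⟩ hs
  simp only [φ, sub_zero, mul_zero, add_zero, zero_rpow (by linarith : p ≠ 0)] at this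
  linarith

lemma rpow_add_mul_sub_add_abs_sub_rpow_le {a t p : ℝ} (ha : 0 ≤ a) (ht : 0 ≤ t) (hp : 2 ≤ p) :
    a ^ p + p * a ^ (p - 1) * (t - a) + |t - a| ^ p ≤ t ^ p := by
  rcases le_total a t with hat | hta
  · simpa [abs_of_nonneg (sub_nonneg.2 hat)] using
      rpow_add_mul_add_rpow_le_add_rpow ha (sub_nonneg.2 hat) hp
  · have := rpow_add_rpow_le_sub_rpow_add_mul (sub_nonneg.2 hta) (sub_le_self a ht) hp
    rw [sub_sub_cancel] at this
    rw [abs_of_nonpos (sub_nonpos.2 hta), neg_sub]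
    linarith

end Real

namespace CFC

variable {A : Type*} [CStarAlgebra A] [PartialOrder A] [StarOrderedRing A]

lemma abs_sub_algebraMap_rpow_eq_cfc {a : A} (ha : IsSelfAdjoint a) (r : ℝ) {p : ℝ}
    (hp : 0 ≤ p) : abs (a - algebraMap ℝ A r) ^ p = cfc (fun t => |t - r| ^ p) a := by
  have hsub : a - algebraMap ℝ A r = cfc (fun t => t - r) a := by
    rw [cfc_sub .., cfc_id' .., cfc_const ..]
  have habs : abs (a - algebraMap ℝ A r) = cfc (fun t => |t - r|) a := by
    rw [abs_eq_cfc_norm _ (hsub ▸ cfc_predicate _ a), hsub, ← cfc_comp' ..]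
    rfl
  rw [habs, rpow_eq_cfc_real (cfc_nonneg fun t _ => _root_.abs_nonneg _), ← cfc_comp' ..]

lemma algebraMap_rpow_add_smul_sub_add_abs_sub_rpow_le {a : A} (ha : 0 ≤ a) {r p : ℝ}
    (hr : 0 ≤ r) (hp : 2 ≤ p) :
    algebraMap ℝ A (r ^ p) + (p * r ^ (p - 1)) • (a - algebraMap ℝ A r)
      + abs (a - algebraMap ℝ A r) ^ p ≤ a ^ p := by
  have hp0 : 0 ≤ p := by linarith
  rw [abs_sub_algebraMap_rpow_eq_cfc ha.isSelfAdjoint r hp0, rpow_eq_cfc_real ha]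
  calc _ = cfc (fun t => r ^ p + p * r ^ (p - 1) * (t - r) + |t - r| ^ p) a := by
        rw [cfc_add .., cfc_add .., cfc_const .., cfc_const_mul .., cfc_sub .., cfc_id' ..,
          cfc_const ..]
    _ ≤ cfc (fun t => t ^ p) a := by
        refine cfc_mono fun t ht => ?_
        exact Real.rpow_add_mul_sub_add_abs_sub_rpow_le hr (spectrum_nonneg_of_nonneg ha ht) hp

end CFC

namespace ContinuousLinearMap

section RCLike

variable {𝕜 E : Type*} [RCLike 𝕜] [NormedAddCommGroup E] [InnerProductSpace 𝕜 E]

lemma re_inner_apply_self_nonneg {T : E →L[𝕜] E} (hT : 0 ≤ T) (x : E) :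
    0 ≤ RCLike.re ⟪T x, x⟫_𝕜 :=
  ((nonneg_iff_isPositive T).1 hT).re_inner_nonneg_left x

lemma re_inner_apply_self_le_of_le {S T : E →L[𝕜] E} (h : S ≤ T) (x : E) :
    RCLike.re ⟪S x, x⟫_𝕜 ≤ RCLike.re ⟪T x, x⟫_𝕜 := by
  have := ((le_def S T).1 h).re_inner_nonneg_left x
  rwa [sub_apply, inner_sub_left, map_sub, sub_nonneg] at this

end RCLike

variable {H : Type*} [NormedAddCommGroup H] [InnerProductSpace ℂ H]

lemma re_inner_algebraMap_apply_self {x : H} (hx : ‖x‖ = 1) (c : ℝ) :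
    (⟪algebraMap ℝ (H →L[ℂ] H) c x, x⟫_ℂ).re = c := by
  simp [Algebra.algebraMap_eq_smul_one, hx]

variable [CompleteSpace H]

lemma re_inner_rpow_add_re_inner_abs_sub_rpow_le {A : H →L[ℂ] H} (hA : 0 ≤ A) {p : ℝ}
    (hp : 2 ≤ p) {x : H} (hx : ‖x‖ = 1) :
    (⟪A x, x⟫_ℂ).re ^ p
      + (⟪(CFC.abs (A - algebraMap ℝ _ (⟪A x, x⟫_ℂ).re) ^ p) x, x⟫_ℂ).re
      ≤ (⟪(A ^ p) x, x⟫_ℂ).re := by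
  set r := (⟪A x, x⟫_ℂ).re
  have hr : 0 ≤ r := re_inner_apply_self_nonneg hA x
  have h := re_inner_apply_self_le_of_le
    (CFC.algebraMap_rpow_add_smul_sub_add_abs_sub_rpow_le hA hr hp) x
  have hcentered : (⟪(A - algebraMap ℝ _ r) x, x⟫_ℂ).re = 0 := by
    rw [sub_apply, inner_sub_left, Complex.sub_re, re_inner_algebraMap_apply_self hx, sub_self]
  simpa only [add_apply, inner_add_left, map_add, RCLike.re_to_complex,
    re_inner_algebraMap_apply_self hx, smul_apply, ← Complex.coe_smul, inner_smul_left,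
    Complex.conj_ofReal, Complex.re_ofReal_mul, hcentered, mul_zero, add_zero] using h

end ContinuousLinearMap

/-- Refined Cauchy–Schwarz inequality for quadratic forms of a positive operator
(`p ≥ 2`, `x`, `y` unit vectors):
`⟨Ax,x⟩^p ⟨Ay,y⟩^p ≤ [⟨A^p x,x⟩ − ⟨|A − ⟨Ax,x⟩I|^p x,x⟩]·[⟨A^p y,y⟩ − ⟨|A − ⟨Ay,y⟩I|^p y,y⟩]
  ≤ ⟨A^p x,x⟩ ⟨A^p y,y⟩`. -/
theorem refined_cauchy_schwarz {H : Type*} [NormedAddCommGroup H]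
    [InnerProductSpace ℂ H] [CompleteSpace H] (A : H →L[ℂ] H) (hA : 0 ≤ A)
    (p : ℝ) (hp : 2 ≤ p) (x y : H) (hx : ‖x‖ = 1) (hy : ‖y‖ = 1) :
    (let absPow : (H →L[ℂ] H) → ℝ → (H →L[ℂ] H) :=
      fun T q => CFC.rpow (CFC.sqrt (star T * T)) q
    (⟪A x, x⟫_ℂ).re ^ p * (⟪A y, y⟫_ℂ).re ^ p ≤
      ((⟪(CFC.rpow A p) x, x⟫_ℂ).re -
        (⟪(absPow (A - ((⟪A x, x⟫_ℂ).re : ℂ) • (1 : H →L[ℂ] H)) p) x, x⟫_ℂ).re) *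
      ((⟪(CFC.rpow A p) y, y⟫_ℂ).re -
        (⟪(absPow (A - ((⟪A y, y⟫_ℂ).re : ℂ) • (1 : H →L[ℂ] H)) p) y, y⟫_ℂ).re) ∧
    ((⟪(CFC.rpow A p) x, x⟫_ℂ).re -
        (⟪(absPow (A - ((⟪A x, x⟫_ℂ).re : ℂ) • (1 : H →L[ℂ] H)) p) x, x⟫_ℂ).re) *
      ((⟪(CFC.rpow A p) y, y⟫_ℂ).re -
        (⟪(absPow (A - ((⟪A y, y⟫_ℂ).re : ℂ) • (1 : H →L[ℂ] H)) p) y, y⟫_ℂ).re) ≤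
      (⟪(CFC.rpow A p) x, x⟫_ℂ).re * (⟪(CFC.rpow A p) y, y⟫_ℂ).re) := by
  intro absPow
  have habsPow (z : H) : absPow (A - ((⟪A z, z⟫_ℂ).re : ℂ) • 1) p
      = CFC.abs (A - algebraMap ℝ _ (⟪A z, z⟫_ℂ).re) ^ p := by
    rw [Complex.coe_smul, ← Algebra.algebraMap_eq_smul_one]
    simp only [absPow, CFC.rpow_eq_pow]
    rfl
  simp only [habsPow, CFC.rpow_eq_pow]
  have hxbound := ContinuousLinearMap.re_inner_rpow_add_re_inner_abs_sub_rpow_le hA hp hx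
  have hybound := ContinuousLinearMap.re_inner_rpow_add_re_inner_abs_sub_rpow_le hA hp hy
  have hpos (z : H) : 0 ≤ (⟪A z, z⟫_ℂ).re ^ p := Real.rpow_nonneg
    (ContinuousLinearMap.re_inner_apply_self_nonneg hA z) p
  have habs_pos (z : H) (r : ℝ) :
      0 ≤ (⟪(CFC.abs (A - algebraMap ℝ _ r) ^ p) z, z⟫_ℂ).re :=
    ContinuousLinearMap.re_inner_apply_self_nonneg (T := CFC.abs (A - algebraMap ℝ _ r) ^ p)
      CFC.rpow_nonneg z
  constructor
  · exact mul_le_mul (by linarith) (by linarith) (hpos y) (by linarith [hpos x])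
  · exact mul_le_mul (by linarith [habs_pos x (⟪A x, x⟫_ℂ).re])
      (by linarith [habs_pos y (⟪A y, y⟫_ℂ).re])
      (by linarith [hpos y]) (by linarith [hpos x, habs_pos x (⟪A x, x⟫_ℂ).re])
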